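/- Let φ(t) := (2π)^{-1/2} e^{-t²/2}, Φ(z) := ∫_{-∞}^{z} φ(t) dt, and for ρ ∈ (−1,1) let h_ρ(x,y) := (2π√(1−ρ²))^{-1} exp(−(x² − 2ρxy + y²)/(2(1−ρ²))) and G(ρ; a, b) := ∫_{-∞}^{a} ∫_{-∞}^{b} h_ρ(x, y) dy dx − Φ(a)Φ(b). Let ρ : ℤ → ℝ be a sequence with |ρ_k| < 1 for all k ≠ 0 and such that ∑_{k∈ℤ, k≠0} |ρ_k|/|k| < ∞. Then for all a, b ∈ ℝ the family k ↦ |G(ρ_k; a, b)|/|k|, k ∈ ℤ ∖ {0}, is summable. -/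

import Mathlib

open Real MeasureTheory

/-- The standard normal density `φ(t) = (2π)^{-1/2} e^{-t²/2}`. -/
noncomputable def stdNormalPDF (t : ℝ) : ℝ := (Real.sqrt (2 * π))⁻¹ * Real.exp (-t ^ 2 / 2)

/-- The standard normal distribution function `Φ(z) = ∫_{-∞}^z φ`. -/
noncomputable def stdNormalCDF (z : ℝ) : ℝ := ∫ t in Set.Iic z, stdNormalPDF t

/-- The bivariate standard normal density with correlation `ρ`. -/
noncomputable def biNormPDF (ρ x y : ℝ) : ℝ :=
  (2 * π * Real.sqrt (1 - ρ ^ 2))⁻¹ *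
    Real.exp (-(x ^ 2 - 2 * ρ * x * y + y ^ 2) / (2 * (1 - ρ ^ 2)))

/-- `G(ρ; a, b)`: the bivariate normal joint distribution function minus the product of
its marginals. -/
noncomputable def Gfun (ρ a b : ℝ) : ℝ :=
  (∫ x in Set.Iic a, ∫ y in Set.Iic b, biNormPDF ρ x y) - stdNormalCDF a * stdNormalCDF b

/-!
Since `h₀(x, y) = φ(x) φ(y)`, `G(ρ; a, b)` is the integral over `(-∞, a] × (-∞, b]` of
`h_ρ - h₀`. For `|ρ| ≤ 1/2`, comparing normalisers and exponents of the two densities gives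
`|h_ρ - h₀| ≤ 8 |ρ| e^{-x²/8} e^{-y²/8}`, hence `|G(ρ; a, b)| ≤ C |ρ|`; for `|ρ| > 1/2` the trivial
bound `|G| ≤ 1 < 2 |ρ|` does. So `|G(ρ_k; a, b)| / |k| ≤ C |ρ_k| / |k|`, and the family is summable
by comparison.
-/

open ProbabilityTheory

lemma abs_exp_sub_exp_le {a b c : ℝ} (ha : a ≤ c) (hb : b ≤ c) :
    |Real.exp a - Real.exp b| ≤ |a - b| * Real.exp c := by
  wlog hba : b ≤ a generalizing a b
  · rw [abs_sub_comm, abs_sub_comm a]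
    exact this hb ha (le_of_not_ge hba)
  have hfactor : Real.exp a - Real.exp b = Real.exp a * (1 - Real.exp (b - a)) := by
    rw [mul_sub, mul_one, ← Real.exp_add, add_sub_cancel]
  have hlin : 1 - Real.exp (b - a) ≤ a - b := by linarith [Real.add_one_le_exp (b - a)]
  have hnonneg : 0 ≤ 1 - Real.exp (b - a) := by
    linarith [Real.exp_le_one_iff.mpr (sub_nonpos.mpr hba)]
  rw [hfactor, abs_of_nonneg (by positivity), abs_of_nonneg (sub_nonneg.mpr hba),
    mul_comm _ (Real.exp c)]
  exact mul_le_mul (Real.exp_le_exp.mpr ha) hlin hnonneg (Real.exp_pos c).le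

lemma abs_mul_two_mul_le {ρ : ℝ} (x y : ℝ) : |ρ * (2 * x * y)| ≤ |ρ| * (x ^ 2 + y ^ 2) := by
  rw [abs_mul]
  gcongr
  rw [abs_le]
  constructor <;> nlinarith [sq_nonneg (x + y), sq_nonneg (x - y)]

lemma norm_integral_integral_le_of_norm_le_mul {α β : Type*} [MeasurableSpace α]
    [MeasurableSpace β] {μ : Measure α} {ν : Measure β} {f : α → β → ℝ} {g : α → ℝ} {h : β → ℝ}
    (hg : Integrable g μ) (hh : Integrable h ν) (hf : ∀ x y, ‖f x y‖ ≤ g x * h y) :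
    ‖∫ x, ∫ y, f x y ∂ν ∂μ‖ ≤ (∫ x, g x ∂μ) * ∫ y, h y ∂ν := by
  have hinner : ∀ x, ‖∫ y, f x y ∂ν‖ ≤ g x * ∫ y, h y ∂ν := fun x =>
    integral_const_mul (g x) h ▸ norm_integral_le_of_norm_le (hh.const_mul _) (.of_forall (hf x))
  exact integral_mul_const _ g ▸ norm_integral_le_of_norm_le (hg.mul_const _) (.of_forall hinner)

lemma stdNormalPDF_eq_gaussianPDFReal : stdNormalPDF = gaussianPDFReal 0 1 := by
  ext t
  simp [stdNormalPDF, gaussianPDFReal]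

lemma one_sub_sq_pos {ρ : ℝ} (hρ : |ρ| < 1) : 0 < 1 - ρ ^ 2 := by
  nlinarith [abs_nonneg ρ, sq_abs ρ]

lemma biNormPDF_eq_mul_gaussianPDFReal {ρ : ℝ} (hρ : |ρ| < 1) (x y : ℝ) :
    biNormPDF ρ x y =
      stdNormalPDF x * gaussianPDFReal (ρ * x) (1 - ρ ^ 2).toNNReal y := by
  have hr := one_sub_sq_pos hρ
  rw [stdNormalPDF_eq_gaussianPDFReal, gaussianPDFReal, gaussianPDFReal, biNormPDF,
    Real.coe_toNNReal _ hr.le, NNReal.coe_one, mul_mul_mul_comm, ← Real.exp_add, ← mul_inv,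
    ← Real.sqrt_mul (by positivity), mul_mul_mul_comm, Real.sqrt_mul (by positivity),
    Real.sqrt_mul_self (by positivity)]
  congr 2
  · rw [one_mul]
  · field_simp [hr.ne']
    ring

lemma biNormPDF_zero (x y : ℝ) : biNormPDF 0 x y = stdNormalPDF x * stdNormalPDF y := by
  simpa [← stdNormalPDF_eq_gaussianPDFReal] using
    biNormPDF_eq_mul_gaussianPDFReal (ρ := 0) (by simp) x y

lemma integrable_stdNormalPDF : Integrable stdNormalPDF :=
  stdNormalPDF_eq_gaussianPDFReal ▸ integrable_gaussianPDFReal 0 1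

lemma integral_stdNormalPDF : ∫ t, stdNormalPDF t = 1 :=
  stdNormalPDF_eq_gaussianPDFReal ▸ integral_gaussianPDFReal_eq_one 0 one_ne_zero

lemma stdNormalPDF_nonneg (t : ℝ) : 0 ≤ stdNormalPDF t := by
  unfold stdNormalPDF; positivity

lemma stdNormalCDF_nonneg (z : ℝ) : 0 ≤ stdNormalCDF z :=
  setIntegral_nonneg measurableSet_Iic fun t _ => stdNormalPDF_nonneg t

lemma stdNormalCDF_le_one (z : ℝ) : stdNormalCDF z ≤ 1 :=
  integral_stdNormalPDF ▸ setIntegral_le_integral integrable_stdNormalPDF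
    (.of_forall stdNormalPDF_nonneg)

lemma biNormPDF_nonneg (ρ x y : ℝ) : 0 ≤ biNormPDF ρ x y := by
  unfold biNormPDF; positivity

lemma continuous_biNormPDF (ρ : ℝ) : Continuous fun p : ℝ × ℝ => biNormPDF ρ p.1 p.2 := by
  unfold biNormPDF; fun_prop

lemma integrable_biNormPDF {ρ : ℝ} (hρ : |ρ| < 1) (x : ℝ) : Integrable (biNormPDF ρ x) := by
  simp_rw [funext (biNormPDF_eq_mul_gaussianPDFReal hρ x)]
  exact (integrable_gaussianPDFReal _ _).const_mul _

lemma integral_biNormPDF {ρ : ℝ} (hρ : |ρ| < 1) (x : ℝ) :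
    ∫ y, biNormPDF ρ x y = stdNormalPDF x := by
  simp_rw [biNormPDF_eq_mul_gaussianPDFReal hρ x, integral_const_mul,
    integral_gaussianPDFReal_eq_one _ (Real.toNNReal_pos.mpr (one_sub_sq_pos hρ)).ne', mul_one]

lemma setIntegral_biNormPDF_nonneg (ρ b x : ℝ) : 0 ≤ ∫ y in Set.Iic b, biNormPDF ρ x y :=
  setIntegral_nonneg measurableSet_Iic fun y _ => biNormPDF_nonneg ρ x y

lemma setIntegral_biNormPDF_le {ρ : ℝ} (hρ : |ρ| < 1) (b x : ℝ) :
    ∫ y in Set.Iic b, biNormPDF ρ x y ≤ stdNormalPDF x :=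
  integral_biNormPDF hρ x ▸ setIntegral_le_integral (integrable_biNormPDF hρ x)
    (.of_forall (biNormPDF_nonneg ρ x))

lemma integrable_setIntegral_biNormPDF {ρ : ℝ} (hρ : |ρ| < 1) (b : ℝ) :
    Integrable fun x => ∫ y in Set.Iic b, biNormPDF ρ x y := by
  refine integrable_stdNormalPDF.mono'
    (continuous_biNormPDF ρ).stronglyMeasurable.integral_prod_right'.aestronglyMeasurable
    (.of_forall fun x => ?_)
  rw [Real.norm_eq_abs, abs_of_nonneg (setIntegral_biNormPDF_nonneg ρ b x)]
  exact setIntegral_biNormPDF_le hρ b x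

lemma abs_Gfun_le_one {ρ : ℝ} (hρ : |ρ| < 1) (a b : ℝ) : |Gfun ρ a b| ≤ 1 := by
  have hmass_nonneg : 0 ≤ ∫ x in Set.Iic a, ∫ y in Set.Iic b, biNormPDF ρ x y :=
    setIntegral_nonneg measurableSet_Iic fun x _ => setIntegral_biNormPDF_nonneg ρ b x
  have hmass_le : ∫ x in Set.Iic a, ∫ y in Set.Iic b, biNormPDF ρ x y ≤ stdNormalCDF a :=
    setIntegral_mono (integrable_setIntegral_biNormPDF hρ b).integrableOn
      integrable_stdNormalPDF.integrableOn (setIntegral_biNormPDF_le hρ b)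
  rw [Gfun, abs_le]
  constructor <;> nlinarith [stdNormalCDF_le_one a, stdNormalCDF_le_one b, stdNormalCDF_nonneg a,
    stdNormalCDF_nonneg b]

lemma Gfun_eq_setIntegral_sub {ρ : ℝ} (hρ : |ρ| < 1) (a b : ℝ) :
    Gfun ρ a b =
      ∫ x in Set.Iic a, ∫ y in Set.Iic b, (biNormPDF ρ x y - biNormPDF 0 x y) := by
  have h0 : |(0 : ℝ)| < 1 := by simp
  have hprod : stdNormalCDF a * stdNormalCDF b =
      ∫ x in Set.Iic a, ∫ y in Set.Iic b, biNormPDF 0 x y := by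
    simp_rw [biNormPDF_zero, integral_const_mul, integral_mul_const]
    rfl
  simp_rw [Gfun, hprod, integral_sub (integrable_biNormPDF hρ _).integrableOn
    (integrable_biNormPDF h0 _).integrableOn]
  rw [integral_sub (integrable_setIntegral_biNormPDF hρ b).integrableOn
    (integrable_setIntegral_biNormPDF h0 b).integrableOn]

lemma sq_le_of_abs_le_half {ρ : ℝ} (hρ : |ρ| ≤ 1 / 2) : ρ ^ 2 ≤ |ρ| / 2 := by
  rw [← sq_abs]; nlinarith [abs_nonneg ρ]

lemma quarter_sum_sq_le_biNorm_exponent {ρ : ℝ} (hρ : |ρ| ≤ 1 / 2) (x y : ℝ) :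
    (x ^ 2 + y ^ 2) / 4 ≤ (x ^ 2 - 2 * ρ * x * y + y ^ 2) / (2 * (1 - ρ ^ 2)) := by
  have hρ2 := sq_le_of_abs_le_half hρ
  have hcross := (abs_le.mp (abs_mul_two_mul_le (ρ := ρ) x y)).2
  rw [div_le_div_iff₀ (by norm_num) (by nlinarith [abs_nonneg ρ])]
  nlinarith [mul_nonneg (sq_nonneg ρ) (add_nonneg (sq_nonneg x) (sq_nonneg y))]

lemma abs_biNorm_exponent_sub_le {ρ : ℝ} (hρ : |ρ| ≤ 1 / 2) (x y : ℝ) :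
    |(x ^ 2 - 2 * ρ * x * y + y ^ 2) / (2 * (1 - ρ ^ 2)) - (x ^ 2 + y ^ 2) / 2| ≤
      |ρ| * (x ^ 2 + y ^ 2) := by
  have hρ2 := sq_le_of_abs_le_half hρ
  have hr : 0 < 2 * (1 - ρ ^ 2) := by nlinarith [abs_nonneg ρ]
  have hr' : 1 - ρ ^ 2 ≠ 0 := by linarith
  have hcross := abs_mul_two_mul_le (ρ := ρ) x y
  have hsplit : (x ^ 2 - 2 * ρ * x * y + y ^ 2) / (2 * (1 - ρ ^ 2)) - (x ^ 2 + y ^ 2) / 2 =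
      (ρ ^ 2 * (x ^ 2 + y ^ 2) - ρ * (2 * x * y)) / (2 * (1 - ρ ^ 2)) := by
    field_simp [hr']
    ring
  rw [hsplit, abs_div, abs_of_pos hr, div_le_iff₀ hr]
  calc |ρ ^ 2 * (x ^ 2 + y ^ 2) - ρ * (2 * x * y)|
      ≤ ρ ^ 2 * (x ^ 2 + y ^ 2) + |ρ| * (x ^ 2 + y ^ 2) := by
        refine (abs_sub _ _).trans (add_le_add (abs_of_nonneg (by positivity)).le hcross)
    _ ≤ |ρ| * (x ^ 2 + y ^ 2) * (2 * (1 - ρ ^ 2)) := by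
        nlinarith [mul_nonneg (abs_nonneg ρ) (add_nonneg (sq_nonneg x) (sq_nonneg y))]

lemma biNorm_normalizer_sub_mem_Icc {ρ : ℝ} (hρ : |ρ| ≤ 1 / 2) :
    (2 * π * Real.sqrt (1 - ρ ^ 2))⁻¹ - (2 * π)⁻¹ ∈ Set.Icc 0 |ρ| := by
  have hρ2 := sq_le_of_abs_le_half hρ
  set t := Real.sqrt (1 - ρ ^ 2)
  have ht_sq : t ^ 2 = 1 - ρ ^ 2 := Real.sq_sqrt (by nlinarith [abs_nonneg ρ])
  have ht_le : t ≤ 1 := Real.sqrt_le_one.mpr (by nlinarith [sq_nonneg ρ])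
  have ht_ge : 3 / 4 ≤ t := by nlinarith [abs_nonneg ρ, Real.sqrt_nonneg (1 - ρ ^ 2)]
  have hdiff : (2 * π * t)⁻¹ - (2 * π)⁻¹ = (1 - t) / (2 * π * t) := by
    field_simp
  have hπ := Real.pi_gt_three
  have h1t : 1 - t ≤ ρ ^ 2 := by nlinarith
  have hscale : 4 ≤ 2 * π * t := by nlinarith
  rw [hdiff]
  refine ⟨div_nonneg (by linarith) (by positivity), ?_⟩
  rw [div_le_iff₀ (by positivity)]
  nlinarith [abs_nonneg ρ]

lemma abs_biNormPDF_sub_biNormPDF_zero_le {ρ : ℝ} (hρ : |ρ| ≤ 1 / 2) (x y : ℝ) :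
    |biNormPDF ρ x y - biNormPDF 0 x y| ≤
      8 * |ρ| * (Real.exp (-8⁻¹ * x ^ 2) * Real.exp (-8⁻¹ * y ^ 2)) := by
  set s := x ^ 2 + y ^ 2 with hs
  set q := (x ^ 2 - 2 * ρ * x * y + y ^ 2) / (2 * (1 - ρ ^ 2))
  set c := (2 * π * Real.sqrt (1 - ρ ^ 2))⁻¹
  have hs0 : 0 ≤ s := by positivity
  have hρ_eq : biNormPDF ρ x y = c * Real.exp (-q) := by rw [biNormPDF, neg_div]
  have h0_eq : biNormPDF 0 x y = (2 * π)⁻¹ * Real.exp (-(s / 2)) := by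
    simp only [biNormPDF, hs]
    norm_num
    ring_nf
  obtain ⟨hc0, hc⟩ : 0 ≤ c - (2 * π)⁻¹ ∧ c - (2 * π)⁻¹ ≤ |ρ| := biNorm_normalizer_sub_mem_Icc hρ
  have hq : s / 4 ≤ q := quarter_sum_sq_le_biNorm_exponent hρ x y
  have hexp_q : Real.exp (-q) ≤ Real.exp (-(s / 4)) := Real.exp_le_exp.mpr (by linarith)
  have hexp_diff : |Real.exp (-q) - Real.exp (-(s / 2))| ≤ |ρ| * s * Real.exp (-(s / 4)) := by
    refine (abs_exp_sub_exp_le (c := -(s / 4)) (by linarith) (by linarith)).trans ?_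
    rw [← abs_neg, neg_sub, sub_neg_eq_add, neg_add_eq_sub]
    gcongr
    exact (abs_biNorm_exponent_sub_le hρ x y).trans_eq (by rw [hs])
  have hinv : (2 * π)⁻¹ ≤ 1 := inv_le_one_of_one_le₀ (by linarith [Real.pi_gt_three])
  calc |biNormPDF ρ x y - biNormPDF 0 x y|
      = |(c - (2 * π)⁻¹) * Real.exp (-q) +
          (2 * π)⁻¹ * (Real.exp (-q) - Real.exp (-(s / 2)))| := by
        rw [hρ_eq, h0_eq]; ring_nf
    _ ≤ (c - (2 * π)⁻¹) * Real.exp (-q) +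
          (2 * π)⁻¹ * |Real.exp (-q) - Real.exp (-(s / 2))| := by
        refine (abs_add_le _ _).trans_eq ?_
        rw [abs_mul, abs_mul, abs_of_nonneg hc0, abs_of_pos (Real.exp_pos _),
          abs_of_pos (by positivity : (0 : ℝ) < (2 * π)⁻¹)]
    _ ≤ |ρ| * Real.exp (-(s / 4)) + 1 * (|ρ| * s * Real.exp (-(s / 4))) := by gcongr
    _ = (1 + s) * |ρ| * Real.exp (-(s / 4)) := by ring
    _ ≤ 8 * Real.exp (s / 8) * |ρ| * Real.exp (-(s / 4)) := by
        gcongr; nlinarith [Real.add_one_le_exp (s / 8)]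
    _ = 8 * |ρ| * (Real.exp (-8⁻¹ * x ^ 2) * Real.exp (-8⁻¹ * y ^ 2)) := by
        rw [mul_right_comm _ |ρ|, mul_assoc 8, ← Real.exp_add, ← Real.exp_add, hs]
        ring_nf

lemma abs_Gfun_le_of_abs_le_half {ρ : ℝ} (hρ : |ρ| ≤ 1 / 2) (a b : ℝ) :
    |Gfun ρ a b| ≤ 8 * (∫ x, Real.exp (-8⁻¹ * x ^ 2)) ^ 2 * |ρ| := by
  set e : ℝ → ℝ := fun x => Real.exp (-8⁻¹ * x ^ 2)
  have he : Integrable e := integrable_exp_neg_mul_sq (by norm_num)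
  have he0 : 0 ≤ e := fun x => (Real.exp_pos _).le
  have hsub : ∀ s : Set ℝ, ∫ x in s, e x ≤ ∫ x, e x := fun s =>
    setIntegral_le_integral he (.of_forall he0)
  rw [Gfun_eq_setIntegral_sub (hρ.trans_lt (by norm_num)), ← Real.norm_eq_abs]
  calc _ ≤ (∫ x in Set.Iic a, 8 * |ρ| * e x) * ∫ y in Set.Iic b, e y :=
        norm_integral_integral_le_of_norm_le_mul (he.const_mul _).integrableOn he.integrableOn
          fun x y => by
            rw [Real.norm_eq_abs, mul_assoc]
            exact abs_biNormPDF_sub_biNormPDF_zero_le hρ x y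
    _ = 8 * |ρ| * ((∫ x in Set.Iic a, e x) * ∫ y in Set.Iic b, e y) := by
        rw [integral_const_mul, mul_assoc]
    _ ≤ 8 * |ρ| * ((∫ x, e x) * ∫ y, e y) := by
        refine mul_le_mul_of_nonneg_left (mul_le_mul (hsub _) (hsub _) ?_ (integral_nonneg he0))
          (by positivity)
        exact setIntegral_nonneg measurableSet_Iic fun y _ => he0 y
    _ = 8 * (∫ x, e x) ^ 2 * |ρ| := by ring

lemma exists_abs_Gfun_le_mul_abs :
    ∃ C, ∀ ρ : ℝ, |ρ| < 1 → ∀ a b, |Gfun ρ a b| ≤ C * |ρ| := by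
  refine ⟨max (8 * (∫ x, Real.exp (-8⁻¹ * x ^ 2)) ^ 2) 2, fun ρ hρ a b => ?_⟩
  rcases le_or_gt |ρ| (1 / 2) with hsmall | hlarge
  · exact (abs_Gfun_le_of_abs_le_half hsmall a b).trans
      (mul_le_mul_of_nonneg_right (le_max_left _ _) (abs_nonneg ρ))
  · calc |Gfun ρ a b| ≤ 2 * |ρ| := by linarith [abs_Gfun_le_one hρ a b]
      _ ≤ _ := mul_le_mul_of_nonneg_right (le_max_right _ _) (abs_nonneg ρ)

/-- if `ρ : ℤ → ℝ` satisfies `|ρ_k| < 1` for all `k ≠ 0` and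
`∑_{k≠0} |ρ_k|/|k| < ∞`, then for all `a, b` the family `k ↦ |G(ρ_k; a, b)|/|k|`,
`k ≠ 0`, is summable. -/
theorem stmt13 (ρ : ℤ → ℝ)
    (h1 : ∀ k : ℤ, k ≠ 0 → |ρ k| < 1)
    (h2 : Summable fun k : {k : ℤ // k ≠ 0} => |ρ (k : ℤ)| / |((k : ℤ) : ℝ)|) :
    ∀ a b : ℝ,
      Summable fun k : {k : ℤ // k ≠ 0} => |Gfun (ρ (k : ℤ)) a b| / |((k : ℤ) : ℝ)| := by
  intro a b
  obtain ⟨C, hC⟩ := exists_abs_Gfun_le_mul_abs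
  refine (h2.mul_left C).of_nonneg_of_le (fun k => by positivity) fun k => ?_
  rw [← mul_div_assoc]
  gcongr
  exact hC _ (h1 k k.2) a b
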